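/- Freezing criterion: if the total Sobol index S_i^T = 0 for a function f of independent discrete inputs, then f does not depend on its i-th argument, i.e., f(y_i, y_{∖i}) = f(y_i', y_{∖i}) for all y_i, y_i' and all y_{∖i} in the support of Y_{∖i}, provided Y_i has full support on Y_i. -/
import Mathlib


open Finset

noncomputable section

/-- Combine a value for coordinate `i` with an assignment of all other coordinates. -/
def combine {n : ℕ} {Y : Fin n → Type} (i : Fin n) (a : Y i)
    (r : ∀ j : {j : Fin n // j ≠ i}, Y j.1) : ∀ j, Y j :=
  fun j => if h : j = i then (congrArg Y h.symm) ▸ a else r ⟨j, h⟩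

variable {n : ℕ} {Y : Fin n → Type} [∀ j, Fintype (Y j)]

/-- joint (product) weight of a full assignment, for independent inputs -/
def jointW (w : ∀ j, Y j → ℝ) (y : ∀ j, Y j) : ℝ := ∏ j, w j (y j)

/-- weight of an assignment of all coordinates except `i` -/
def restW (w : ∀ j, Y j → ℝ) (i : Fin n)
    (r : ∀ j : {j : Fin n // j ≠ i}, Y j.1) : ℝ := ∏ j, w j.1 (r j)

/-- expectation of `f` over all variables -/
def meanAll (w : ∀ j, Y j → ℝ) (f : (∀ j, Y j) → ℝ) : ℝ :=
  ∑ y, jointW w y * f y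

/-- variance of `f` over all variables -/
def varAll (w : ∀ j, Y j → ℝ) (f : (∀ j, Y j) → ℝ) : ℝ :=
  ∑ y, jointW w y * (f y) ^ 2 - (meanAll w f) ^ 2

/-- `E_{∖i}[f]` as a function of `y_i` -/
def Erest (w : ∀ j, Y j → ℝ) (i : Fin n) (f : (∀ j, Y j) → ℝ) (a : Y i) : ℝ :=
  ∑ r, restW w i r * f (combine i a r)

/-- variance over `Y_i` of a function of `y_i` -/
def varI (w : ∀ j, Y j → ℝ) (i : Fin n) (g : Y i → ℝ) : ℝ :=
  ∑ a, w i a * (g a) ^ 2 - (∑ a, w i a * g a) ^ 2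

/-- `Var_i[f]` as a function of the assignment of the remaining variables -/
def varIf (w : ∀ j, Y j → ℝ) (i : Fin n) (f : (∀ j, Y j) → ℝ)
    (r : ∀ j : {j : Fin n // j ≠ i}, Y j.1) : ℝ :=
  varI w i (fun a => f (combine i a r))

/-- `E_{∖i}[h]` for a function `h` of the remaining variables -/
def ErestOf (w : ∀ j, Y j → ℝ) (i : Fin n)
    (h : (∀ j : {j : Fin n // j ≠ i}, Y j.1) → ℝ) : ℝ :=
  ∑ r, restW w i r * h r

/-- `E_i[f]` as a function of the assignment of the remaining variables -/
def Ei (w : ∀ j, Y j → ℝ) (i : Fin n) (f : (∀ j, Y j) → ℝ)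
    (r : ∀ j : {j : Fin n // j ≠ i}, Y j.1) : ℝ :=
  ∑ a, w i a * f (combine i a r)

/-- variance over the remaining variables of a function of them -/
def varRest (w : ∀ j, Y j → ℝ) (i : Fin n)
    (h : (∀ j : {j : Fin n // j ≠ i}, Y j.1) → ℝ) : ℝ :=
  ∑ r, restW w i r * (h r) ^ 2 - (∑ r, restW w i r * h r) ^ 2

lemma varI_eq_sum_sq (w : ∀ j, Y j → ℝ) (i : Fin n) (g : Y i → ℝ)
    (hw1 : ∑ a, w i a = 1) :
    varI w i g = ∑ a, w i a * (g a - ∑ b, w i b * g b) ^ 2 := by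
  have h : ∀ a ∈ (univ : Finset (Y i)),
      w i a * (g a - ∑ b, w i b * g b) ^ 2 =
      w i a * g a ^ 2 - 2 * (∑ b, w i b * g b) * (w i a * g a)
        + (∑ b, w i b * g b) ^ 2 * w i a := by
    intro a _; ring
  rw [Finset.sum_congr rfl h]
  simp only [Finset.sum_add_distrib, Finset.sum_sub_distrib, ← Finset.mul_sum, hw1]
  unfold varI
  ring

/-- freezing criterion: if the total Sobol index `S_i^T` is zero
(inputs independent with strictly positive mass functions), then `f` does not
depend on its `i`-th argument. -/
theorem freezing_criterion
    (w : ∀ j, Y j → ℝ) (i : Fin n) (f : (∀ j, Y j) → ℝ)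
    (hw0 : ∀ j a, 0 < w j a) (hw1 : ∀ j, ∑ a, w j a = 1)
    (hV : 0 < varAll w f)
    (hST : ErestOf w i (varIf w i f) / varAll w f = 0) :
    ∀ (r : ∀ j : {j : Fin n // j ≠ i}, Y j.1) (a a' : Y i),
      f (combine i a r) = f (combine i a' r) := by
  have hE : ErestOf w i (varIf w i f) = 0 := by
    rcases div_eq_zero_iff.mp hST with h | h
    · exact h
    · exact absurd h hV.ne'
  have hrestW : ∀ r : ∀ j : {j : Fin n // j ≠ i}, Y j.1, 0 < restW w i r := by
    intro r
    exact Finset.prod_pos fun j _ => hw0 j.1 (r j)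
  have hvarI : ∀ r, varIf w i f r =
      ∑ a, w i a * (f (combine i a r) - ∑ b, w i b * f (combine i b r)) ^ 2 := by
    intro r
    exact varI_eq_sum_sq w i (fun a => f (combine i a r)) (hw1 i)
  have hnn : ∀ r, 0 ≤ varIf w i f r := by
    intro r
    rw [hvarI r]
    exact Finset.sum_nonneg fun a _ => mul_nonneg (hw0 i a).le (sq_nonneg _)
  have hzero : ∀ r, varIf w i f r = 0 := by
    intro r
    have := (Finset.sum_eq_zero_iff_of_nonneg
      (fun r _ => mul_nonneg (hrestW r).le (hnn r))).mp hE r (Finset.mem_univ r)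
    rcases mul_eq_zero.mp this with h | h
    · exact absurd h (hrestW r).ne'
    · exact h
  intro r a a'
  have hz := hzero r
  rw [hvarI r] at hz
  have hterm := (Finset.sum_eq_zero_iff_of_nonneg
    (fun a _ => mul_nonneg (hw0 i a).le (sq_nonneg _))).mp hz
  have key : ∀ a, f (combine i a r) = ∑ b, w i b * f (combine i b r) := by
    intro a
    have := hterm a (Finset.mem_univ a)
    rcases mul_eq_zero.mp this with h | h
    · exact absurd h (hw0 i a).ne'
    · exact sub_eq_zero.mp (pow_eq_zero_iff two_ne_zero |>.mp h)
  rw [key a, key a']
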